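/- arXiv:2201.09825 — 2 statements merged into one kernel-verified Lean document; each statement's English description precedes it below -/
import Mathlib

section
/- For a lock-free monoid M ≤ A^A, the least finite support of the equivalence class [m]_S in the nominal M-set M|_S (of ≈_S-classes of M, with action ℓ·[m]_S = [ℓ·m]_S) is exactly m[S], for every finite S ⊆ A and m ∈ M. -/
variable {A : Type*}

/-- An `M`-set structure on `X`, for a submonoid `M ≤ A^A`. -/
structure MSetOn (M : Submonoid (Function.End A)) (X : Type*) where
  act : M → X → X
  one_act : ∀ x, act 1 x = x
  mul_act : ∀ m m' x, act (m * m') x = act m (act m' x)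

/-- `S ⊆ A` supports `x`. -/
def MSetOn.Supports {M : Submonoid (Function.End A)} {X : Type*} (ms : MSetOn M X)
    (S : Set A) (x : X) : Prop :=
  ∀ m m' : M, (∀ a ∈ S, m.1 a = m'.1 a) → ms.act m x = ms.act m' x

/-- `S` is the least finite support of `x`. -/
def MSetOn.IsLeastSupport {M : Submonoid (Function.End A)} {X : Type*} (ms : MSetOn M X)
    (S : Set A) (x : X) : Prop :=
  S.Finite ∧ ms.Supports S x ∧ ∀ T : Set A, T.Finite → ms.Supports T x → S ⊆ T

/-- The setoid on `M` of agreement on `S`. -/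
def restSetoid (M : Submonoid (Function.End A)) (S : Set A) : Setoid M where
  r m m' := ∀ a ∈ S, m.1 a = m'.1 a
  iseqv := ⟨fun _ _ _ => rfl, fun h a ha => (h a ha).symm,
    fun h1 h2 a ha => (h1 a ha).trans (h2 a ha)⟩

/-- The `M`-set `M|_S` of `≈_S`-classes, with action by left multiplication. -/
def restAction (M : Submonoid (Function.End A)) (S : Set A) :
    MSetOn M (Quotient (restSetoid M S)) where
  act ℓ := Quotient.map (fun m => ℓ * m)
    (fun m m' h a ha => show ℓ.1 (m.1 a) = ℓ.1 (m'.1 a) from congrArg ℓ.1 (h a ha))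
  one_act q := Quotient.inductionOn q (fun m => by
    simp only [Quotient.map_mk, one_mul])
  mul_act m m' q := Quotient.inductionOn q (fun k => by
    simp only [Quotient.map_mk, mul_assoc]; rfl)

/-- `M` is lock-free: any atom outside a finite set `R` can be moved while fixing `R`. -/
def LockFree (M : Submonoid (Function.End A)) : Prop :=
  ∀ R : Set A, R.Finite → ∀ a ∉ R, ∃ ℓ : M, (∀ r ∈ R, ℓ.1 r = r) ∧ ℓ.1 a ≠ a

section RestAction

variable (M : Submonoid (Function.End A)) (S : Set A)

theorem restAction_act_mk (ℓ m : M) :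
    (restAction M S).act ℓ (Quotient.mk (restSetoid M S) m) =
      Quotient.mk (restSetoid M S) (ℓ * m) :=
  rfl

theorem restAction_supports_image (m : M) :
    (restAction M S).Supports ((fun a => m.1 a) '' S) (Quotient.mk (restSetoid M S) m) :=
  fun ℓ ℓ' h => Quotient.sound fun a ha =>
    show ℓ.1 (m.1 a) = ℓ'.1 (m.1 a) from h (m.1 a) ⟨a, ha, rfl⟩

end RestAction

/-- If `m a ∉ T`, lock-freeness gives `ℓ` fixing `T` but moving `m a`; then `ℓ` and `1` agree
on `T` yet `ℓ * m` and `m` disagree at `a ∈ S`. -/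
theorem LockFree.image_subset_of_supports {M : Submonoid (Function.End A)} (hM : LockFree M)
    {S T : Set A} (hT : T.Finite) {m : M}
    (hsupp : (restAction M S).Supports T (Quotient.mk (restSetoid M S) m)) :
    (fun a => m.1 a) '' S ⊆ T := by
  rintro _ ⟨a, ha, rfl⟩
  by_contra hmT
  obtain ⟨ℓ, hfix, hmove⟩ := hM T hT _ hmT
  have hclass : Quotient.mk (restSetoid M S) (ℓ * m) = Quotient.mk (restSetoid M S) m := by
    simpa only [restAction_act_mk, one_mul] using hsupp ℓ 1 hfix
  exact hmove (Quotient.exact hclass a ha)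

/-- For a lock-free monoid `M ≤ A^A` and finite `S ⊆ A`, the least finite
support of the class `[m]_S` in the nominal `M`-set `M|_S` is exactly `m[S]`. -/
theorem leastSupport_restAction (M : Submonoid (Function.End A)) (hM : LockFree M)
    (S : Set A) (hS : S.Finite) (m : M) :
    (restAction M S).IsLeastSupport ((fun a => m.1 a) '' S)
      (Quotient.mk (restSetoid M S) m) :=
  ⟨hS.image _, restAction_supports_image M S m,
    fun _ hT hsupp => hM.image_subset_of_supports hT hsupp⟩
end

section
/- If M ≤ A^A admits least supports, then the functor F: Supp(A) → Nom(M), sending a supported set X to the nominal M-set F X = { ([m]_{s(x)}, x) : x ∈ X, m ∈ M } with action ℓ·([m]_{s(x)},x) = ([ℓ·m]_{s(x)},x), is left adjoint to the forgetful functor U: Nom(M) → Supp(A), with unit η_X(x) = ([id_A]_{s(x)}, x); concretely, every map f: X → UY with supp(f(x)) ⊆ s_X(x) extends uniquely to an equivariant map g: FX → Y with g([m]_{s(x)},x) = m·f(x). -/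
variable {A : Type*}

/-- A supported set over `A`. -/
structure SuppSet (A : Type*) where
  carrier : Type*
  supp : carrier → Set A
  finite : ∀ x, (supp x).Finite

/-- An `M`-set is nominal if every element has a finite support. -/
def MSetOn.Nominal {M : Submonoid (Function.End A)} {X : Type*} (ms : MSetOn M X) : Prop :=
  ∀ x, ∃ S : Set A, S.Finite ∧ ms.Supports S x

/-- The free nominal `M`-set on a supported set `X`:
pairs `([m]_{s(x)}, x)` with action `ℓ·([m]_{s(x)}, x) = ([ℓ·m]_{s(x)}, x)`. -/
def freeAct (M : Submonoid (Function.End A)) (X : SuppSet A) :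
    MSetOn M ((x : X.carrier) × Quotient (restSetoid M (X.supp x))) where
  act ℓ p := ⟨p.1, Quotient.map (fun m => ℓ * m)
    (fun m m' h a ha => show ℓ.1 (m.1 a) = ℓ.1 (m'.1 a) from
      congrArg ℓ.1 ((h : ∀ a ∈ X.supp p.1, m.1 a = m'.1 a) a ha)) p.2⟩
  one_act p := by
    rcases p with ⟨x, q⟩
    induction q using Quotient.inductionOn with
    | h k => simp only [Quotient.map_mk, one_mul]
  mul_act m m' p := by
    rcases p with ⟨x, q⟩
    induction q using Quotient.inductionOn with
    | h k =>
      simp only [Quotient.map_mk, mul_assoc]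
      rfl

/-! The class `[m]_{s(x)}` determines `m · f x`, because `s(x)` contains the least support of
`f x` and hence supports it; so `([m]_{s(x)}, x) ↦ m · f x` is well defined. It is equivariant
since the action on `F X` is post-composition, and it is the only candidate, because every
element of `F X` has the form `([m]_{s(x)}, x)`. -/

section

variable {M : Submonoid (Function.End A)}

theorem MSetOn.Supports.mono {Y : Type*} {ms : MSetOn M Y} {S T : Set A} {y : Y}
    (h : ms.Supports S y) (hST : S ⊆ T) : ms.Supports T y :=
  fun m m' hmm' => h m m' fun a ha => hmm' a (hST ha)

theorem MSetOn.IsLeastSupport.supports_of_subset {Y : Type*} {ms : MSetOn M Y} {S T : Set A}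
    {y : Y} (h : ms.IsLeastSupport S y) (hST : S ⊆ T) : ms.Supports T y :=
  h.2.1.mono hST

namespace freeAct

variable {X : SuppSet A}

theorem act_mk (ℓ m : M) (x : X.carrier) :
    (freeAct M X).act ℓ ⟨x, Quotient.mk _ m⟩ = ⟨x, Quotient.mk _ (ℓ * m)⟩ :=
  rfl

theorem supports_image_mk (x : X.carrier) (m : M) :
    (freeAct M X).Supports (m.1 '' X.supp x) ⟨x, Quotient.mk _ m⟩ := by
  intro ℓ ℓ' hℓ
  rw [act_mk, act_mk]
  exact congrArg (Sigma.mk x) <| Quotient.sound fun a ha => hℓ (m.1 a) ⟨a, ha, rfl⟩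

theorem nominal (X : SuppSet A) : (freeAct M X).Nominal := by
  rintro ⟨x, q⟩
  induction q using Quotient.inductionOn with
  | h m => exact ⟨m.1 '' X.supp x, (X.finite x).image _, supports_image_mk x m⟩

variable {Y : Type*} (msY : MSetOn M Y)

def lift (f : X.carrier → Y) (hf : ∀ x, msY.Supports (X.supp x) (f x)) :
    ((x : X.carrier) × Quotient (restSetoid M (X.supp x))) → Y :=
  fun p => Quotient.lift (fun m => msY.act m (f p.1)) (fun m m' h => hf p.1 m m' h) p.2

variable {msY} {f : X.carrier → Y} {hf : ∀ x, msY.Supports (X.supp x) (f x)}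

theorem lift_mk (x : X.carrier) (m : M) :
    lift msY f hf ⟨x, Quotient.mk _ m⟩ = msY.act m (f x) :=
  rfl

theorem lift_act (ℓ : M) (p : (x : X.carrier) × Quotient (restSetoid M (X.supp x))) :
    lift msY f hf ((freeAct M X).act ℓ p) = msY.act ℓ (lift msY f hf p) := by
  rcases p with ⟨x, q⟩
  induction q using Quotient.inductionOn with
  | h m => exact msY.mul_act ℓ m (f x)

theorem eq_lift {g : ((x : X.carrier) × Quotient (restSetoid M (X.supp x))) → Y}
    (hg : ∀ x m, g ⟨x, Quotient.mk _ m⟩ = msY.act m (f x)) : g = lift msY f hf := by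
  funext ⟨x, q⟩
  induction q using Quotient.inductionOn with
  | h m => exact hg x m

end freeAct

end

/-- If `M` admits least supports, the free nominal `M`-set `F X` on a
supported set `X` is nominal and is free over `X`: every map `f : X → Y` into a nominal
`M`-set `Y` (with least supports `suppY`) satisfying `suppY (f x) ⊆ s_X(x)` extends to a
unique equivariant map `g : F X → Y` with `g ([m]_{s(x)}, x) = m · f x`; in particular
`g` extends `f` along the unit `x ↦ ([id]_{s(x)}, x)`. -/
theorem free_nominal_adjunction (M : Submonoid (Function.End A)) (X : SuppSet A) :
    (freeAct M X).Nominal ∧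
    ∀ (Y : Type*) (msY : MSetOn M Y) (suppY : Y → Set A),
      (∀ y, msY.IsLeastSupport (suppY y) y) →
      ∀ f : X.carrier → Y, (∀ x, suppY (f x) ⊆ X.supp x) →
      ∃! g : ((x : X.carrier) × Quotient (restSetoid M (X.supp x))) → Y,
        (∀ (ℓ : M) p, g ((freeAct M X).act ℓ p) = msY.act ℓ (g p)) ∧
        (∀ (x : X.carrier) (m : M),
          g ⟨x, Quotient.mk (restSetoid M (X.supp x)) m⟩ = msY.act m (f x)) := by
  refine ⟨freeAct.nominal X, fun Y msY suppY hleast f hf => ?_⟩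
  have hsupp : ∀ x, msY.Supports (X.supp x) (f x) :=
    fun x => (hleast (f x)).supports_of_subset (hf x)
  exact ⟨freeAct.lift msY f hsupp, ⟨freeAct.lift_act, freeAct.lift_mk⟩,
    fun g hg => freeAct.eq_lift hg.2⟩
end
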